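/- Let V be a finite-dimensional complex vector space with a nondegenerate symmetric bilinear form ω, let n = dim V, and suppose k ≤ 3, or k = 4 and n = 4. If a linear map A : ℂᵏ → V is not ample with respect to ω and B : ℂᵏ → ℂᵖ is a nonzero linear map, then there exists a linear map C : ℂᵖ → V such that A + C ∘ B is ample with respect to ω. -/

import Mathlib

/-- A linear map `A : E → W` is ample with respect to a bilinear form `β` on `W` if the
restriction of `β` to the range of `A` is either identically zero or nondegenerate. -/
def IsAmple {E W : Type*} [AddCommGroup E] [Module ℂ E] [AddCommGroup W] [Module ℂ W]
    (β : W →ₗ[ℂ] W →ₗ[ℂ] ℂ) (A : E →ₗ[ℂ] W) : Prop :=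
  (∀ w ∈ LinearMap.range A, ∀ w' ∈ LinearMap.range A, β w w' = 0) ∨
  (∀ w ∈ LinearMap.range A, w ≠ 0 → ∃ w' ∈ LinearMap.range A, β w w' ≠ 0)

/-!
Every `A + C ∘ B` agrees with `A` on `ker B`, and since `B ≠ 0` the map `C` can be chosen so that
the range of `A + C ∘ B` is `U ⊔ ℂ w` for `U = A (ker B)` and any prescribed `w`. If `ω` vanishes
on `U`, take `w = 0`. Otherwise the radical `R = U ⊓ U^⊥` is a proper subspace of `U` with
`dim R + dim U ≤ dim V`; together with `dim U < k` the dimension hypotheses force `dim R ≤ 1`.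
If `R = ℂ u₀ ≠ 0`, any `w` with `ω u₀ w = 1` makes `ω` nondegenerate on `U ⊔ ℂ w`.
-/

open Module Submodule

namespace LinearMap

variable {K E F W : Type*} [Field K] [AddCommGroup E] [Module K E] [AddCommGroup F] [Module K F]
  [AddCommGroup W] [Module K W]

theorem exists_comp_comp_eq_self (B : E →ₗ[K] F) : ∃ g : F →ₗ[K] E, B ∘ₗ g ∘ₗ B = B := by
  obtain ⟨s, hs⟩ := B.rangeRestrict.exists_rightInverse_of_surjective B.range_rangeRestrict
  obtain ⟨g, rfl⟩ := s.exists_extend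
  refine ⟨g, LinearMap.ext fun x => ?_⟩
  exact congr_arg Subtype.val (LinearMap.congr_fun hs (B.rangeRestrict x))

theorem finrank_map_ker_lt [FiniteDimensional K E] (A : E →ₗ[K] W) {B : E →ₗ[K] F} (hB : B ≠ 0) :
    finrank K ((ker B).map A) < finrank K E :=
  (finrank_map_le A _).trans_lt (finrank_lt (ker_eq_top.not.mpr hB))

theorem exists_range_add_comp_eq_sup_span (A : E →ₗ[K] W) {B : E →ₗ[K] F} (hB : B ≠ 0) (w : W) :
    ∃ C : F →ₗ[K] W, range (A + C ∘ₗ B) = (ker B).map A ⊔ K ∙ w := by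
  obtain ⟨g, hgB⟩ := B.exists_comp_comp_eq_self
  have hg x : B (g (B x)) = B x := LinearMap.congr_fun hgB x
  obtain ⟨x₀, hx₀⟩ : ∃ x₀, B x₀ ≠ 0 := not_forall.mp fun h => hB (LinearMap.ext h)
  obtain ⟨φ, hφ⟩ := Projective.exists_dual_eq_one K hx₀
  set C := φ.smulRight w - A ∘ₗ g
  have hC : ∀ x, (A + C ∘ₗ B) x = A (x - g (B x)) + φ (B x) • w := fun x => by
    simp only [C, add_apply, comp_apply, sub_apply, smulRight_apply, map_sub]
    abel
  refine ⟨C, le_antisymm ?_ (sup_le ?_ ?_)⟩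
  · rintro _ ⟨x, rfl⟩
    rw [hC]
    have hx : x - g (B x) ∈ ker B := by simp [hg]
    exact add_mem_sup (mem_map_of_mem hx) (smul_mem _ _ (mem_span_singleton_self w))
  · rintro _ ⟨x, hx, rfl⟩
    exact ⟨x, by simp_all⟩
  · rw [span_singleton_le_iff_mem]
    exact ⟨g (B x₀), by simp [hC, hg, hφ]⟩

end LinearMap

namespace LinearMap.BilinForm

variable {K V : Type*} [Field K] [AddCommGroup V] [Module K V] {B : LinearMap.BilinForm K V}
  {U : Submodule K V}

theorem finrank_inf_orthogonal_lt [FiniteDimensional K V] (hU : ¬ U ≤ B.orthogonal U) :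
    finrank K ↥(U ⊓ B.orthogonal U) < finrank K U :=
  finrank_lt_finrank_of_lt (inf_lt_left.mpr hU)

theorem two_mul_finrank_inf_orthogonal_lt [FiniteDimensional K V] (hB : LinearMap.ker B = ⊥)
    (hU : ¬ U ≤ B.orthogonal U) : 2 * finrank K ↥(U ⊓ B.orthogonal U) < finrank K V := by
  have hsum := finrank_add_finrank_orthogonal' (B := B) U
  rw [hB, inf_bot_eq, finrank_bot, add_zero] at hsum
  have hleU := finrank_inf_orthogonal_lt hU
  have hleO := finrank_mono (inf_le_right : U ⊓ B.orthogonal U ≤ B.orthogonal U)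
  omega

theorem exists_disjoint_orthogonal_sup_span_singleton [FiniteDimensional K V] (hr : B.IsRefl)
    (hB : LinearMap.ker B = ⊥) (hU : finrank K ↥(U ⊓ B.orthogonal U) ≤ 1) :
    ∃ w : V, Disjoint (U ⊔ K ∙ w) (B.orthogonal (U ⊔ K ∙ w)) := by
  obtain ⟨u₀, hR⟩ := ((U ⊓ B.orthogonal U).finrank_le_one_iff_isPrincipal.mp hU).principal
  by_cases hu₀ : u₀ = 0
  · refine ⟨0, ?_⟩
    rw [span_zero_singleton, sup_bot_eq, disjoint_iff, hR, hu₀, span_zero_singleton]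
  obtain ⟨w, hw⟩ : ∃ w, B u₀ w = 1 := by
    have : B u₀ ≠ 0 := fun h => hu₀ (ker_eq_bot'.mp hB u₀ h)
    obtain ⟨y, hy⟩ : ∃ y, B u₀ y ≠ 0 := by simpa using DFunLike.ne_iff.mp this
    exact ⟨(B u₀ y)⁻¹ • y, by simp [inv_mul_cancel₀ hy]⟩
  have hu₀R : u₀ ∈ U ⊓ B.orthogonal U := hR ▸ mem_span_singleton_self u₀
  refine ⟨w, disjoint_def.mpr ?_⟩
  rintro _ hv hvo
  obtain ⟨u, hu, _, hbw, rfl⟩ := mem_sup.mp hv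
  obtain ⟨b, rfl⟩ := mem_span_singleton.mp hbw
  -- pairing with `u₀` kills the `U`-component and detects `b`
  have hb : b = 0 := by
    have h := hvo u₀ (mem_sup_left hu₀R.1)
    simpa [hr _ _ (hu₀R.2 u hu), hw] using h
  subst hb
  rw [zero_smul, add_zero] at hvo ⊢
  have huR : u ∈ U ⊓ B.orthogonal U := ⟨hu, fun n hn => hvo n (mem_sup_left hn)⟩
  obtain ⟨c, rfl⟩ := mem_span_singleton.mp (hR ▸ huR)
  have hc : c * B w u₀ = 0 := by simpa using hvo w (mem_sup_right (mem_span_singleton_self w))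
  have hwu₀ : B w u₀ ≠ 0 := fun h => by simpa [hw] using hr _ _ h
  simp [(mul_eq_zero.mp hc).resolve_right hwu₀]

end LinearMap.BilinForm

section IsAmple

variable {E W : Type*} [AddCommGroup E] [Module ℂ E] [AddCommGroup W] [Module ℂ W]
  {β : LinearMap.BilinForm ℂ W} {A : E →ₗ[ℂ] W}

theorem isAmple_of_range_le_orthogonal
    (h : LinearMap.range A ≤ β.orthogonal (LinearMap.range A)) : IsAmple β A :=
  Or.inl fun _ hw _ hw' => h hw' _ hw

theorem isAmple_of_disjoint_orthogonal (hβ : β.IsRefl)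
    (h : Disjoint (LinearMap.range A) (β.orthogonal (LinearMap.range A))) : IsAmple β A := by
  refine Or.inr fun w hw hw₀ => ?_
  by_contra! hβw
  exact hw₀ (disjoint_def.mp h w hw fun w' hw' => hβ _ _ (hβw w' hw'))

end IsAmple

open LinearMap.BilinForm

theorem not_ample_perturb_comp_general {V : Type*} [AddCommGroup V] [Module ℂ V]
    [FiniteDimensional ℂ V]
    (ω : V →ₗ[ℂ] V →ₗ[ℂ] ℂ)
    (hsymm : ∀ x y : V, ω x y = ω y x)
    (hnd : ∀ x : V, (∀ y : V, ω x y = 0) → x = 0)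
    (k p : ℕ) (hk : k ≤ 3 ∨ (k = 4 ∧ Module.finrank ℂ V = 4))
    (A : (Fin k → ℂ) →ₗ[ℂ] V)
    (B : (Fin k → ℂ) →ₗ[ℂ] (Fin p → ℂ)) (hB : B ≠ 0) :
    ∃ C : (Fin p → ℂ) →ₗ[ℂ] V, IsAmple ω (A + C ∘ₗ B) := by
  have hrefl : IsRefl ω := fun x y h => (hsymm y x).trans h
  have hker : LinearMap.ker ω = ⊥ := LinearMap.ker_eq_bot'.mpr fun x hx => hnd x (by simp [hx])
  set U := (LinearMap.ker B).map A
  by_cases hiso : U ≤ orthogonal ω U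
  · obtain ⟨C, hC⟩ := LinearMap.exists_range_add_comp_eq_sup_span A hB 0
    rw [span_zero_singleton, sup_bot_eq] at hC
    exact ⟨C, isAmple_of_range_le_orthogonal (hC ▸ hiso)⟩
  have hR : finrank ℂ ↥(U ⊓ orthogonal ω U) ≤ 1 := by
    have hRU := finrank_inf_orthogonal_lt hiso
    have hRV := two_mul_finrank_inf_orthogonal_lt hker hiso
    have hUk : finrank ℂ U < k := by simpa using LinearMap.finrank_map_ker_lt A hB
    omega
  obtain ⟨w, hw⟩ := exists_disjoint_orthogonal_sup_span_singleton hrefl hker hR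
  obtain ⟨C, hC⟩ := LinearMap.exists_range_add_comp_eq_sup_span A hB w
  exact ⟨C, isAmple_of_disjoint_orthogonal hrefl (hC ▸ hw)⟩

/-- Proposition 4(A): let `V` carry a nondegenerate symmetric bilinear form `ω`, and suppose
`k ≤ 3`, or `k = 4` and `dim V = 4`. If `A : ℂᵏ → V` is not ample and `B : ℂᵏ → ℂᵖ` is
nonzero, then `A + C ∘ B` is ample for some `C : ℂᵖ → V`. -/
theorem not_ample_perturb_comp {V : Type*} [AddCommGroup V] [Module ℂ V]
    [FiniteDimensional ℂ V]
    (ω : V →ₗ[ℂ] V →ₗ[ℂ] ℂ)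
    (hsymm : ∀ x y : V, ω x y = ω y x)
    (hnd : ∀ x : V, (∀ y : V, ω x y = 0) → x = 0)
    (k p : ℕ) (hk : k ≤ 3 ∨ (k = 4 ∧ Module.finrank ℂ V = 4))
    (A : (Fin k → ℂ) →ₗ[ℂ] V) (hA : ¬ IsAmple ω A)
    (B : (Fin k → ℂ) →ₗ[ℂ] (Fin p → ℂ)) (hB : B ≠ 0) :
    ∃ C : (Fin p → ℂ) →ₗ[ℂ] V, IsAmple ω (A + C ∘ₗ B) :=
  not_ample_perturb_comp_general ω hsymm hnd k p hk A B hB
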